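/- Let α, β be partitions of the same size with at most p, resp. q, parts. The set of p×q matrices with entries in {0,1}, row sums α_i, and column sums β_j is nonempty if and only if β ⪯ ᵗα in dominance order; it has exactly one element if β = ᵗα, and at least two if β ≺ ᵗα strictly. -/

import Mathlib

open Finset

/-- The `i`-th row sum of a boolean matrix. -/
def rowSumB {p q : ℕ} (a : Matrix (Fin p) (Fin q) Bool) (i : Fin p) : ℕ :=
  (Finset.univ.filter fun j => a i j = true).card

/-- The `j`-th column sum of a boolean matrix. -/
def colSumB {p q : ℕ} (a : Matrix (Fin p) (Fin q) Bool) (j : Fin q) : ℕ :=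
  (Finset.univ.filter fun i => a i j = true).card

/-- `M_{p,q}(α,β)`: the p×q 0/1 matrices with row sums `α` and column sums `β`. -/
def MatSet (p q : ℕ) (α : Fin p → ℕ) (β : Fin q → ℕ) : Set (Matrix (Fin p) (Fin q) Bool) :=
  {a | (∀ i, rowSumB a i = α i) ∧ ∀ j, colSumB a j = β j}

/-- `RT(α,β)`: row-tableaux of shape `α` and weight `β`.  A tableau with strictly
increasing rows is encoded by the finite set of entries of each row: row `i` is a set of
`α i` entries (column indices), and the entry `j` occurs `β j` times in the tableau. -/
def RTSet (p q : ℕ) (α : Fin p → ℕ) (β : Fin q → ℕ) : Set (Fin p → Finset (Fin q)) :=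
  {T | (∀ i, (T i).card = α i) ∧ ∀ j, (Finset.univ.filter fun i => j ∈ T i).card = β j}

/-- The conjugate (transpose) partition of `α`, as a function `ℕ → ℕ`
(`conj α j` = number of parts of `α` that are `≥ j+1`). -/
def conjP {p : ℕ} (α : Fin p → ℕ) : ℕ → ℕ :=
  fun j => (Finset.univ.filter fun i => j < α i).card

/-- A partition with at most `q` parts extended by zeros to a function `ℕ → ℕ`. -/
def extP {q : ℕ} (β : Fin q → ℕ) : ℕ → ℕ :=
  fun j => if h : j < q then β ⟨j, h⟩ else 0

/-- Dominance order on partitions (given as functions `ℕ → ℕ`): all partial sums of `f`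
are bounded by those of `g`. -/
def DomP (f g : ℕ → ℕ) : Prop :=
  ∀ J : ℕ, ∑ j ∈ Finset.range J, f j ≤ ∑ j ∈ Finset.range J, g j

section Helpers
variable {p q : ℕ}

lemma rowSumB_eq_sum (a : Matrix (Fin p) (Fin q) Bool) (i : Fin p) :
    rowSumB a i = ∑ j : Fin q, if a i j = true then 1 else 0 :=
  Finset.card_filter _ _

lemma colSumB_eq_sum (a : Matrix (Fin p) (Fin q) Bool) (j : Fin q) :
    colSumB a j = ∑ i : Fin p, if a i j = true then 1 else 0 :=
  Finset.card_filter _ _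

lemma filter_range_lt (m J : ℕ) :
    (Finset.range J).filter (fun j => j < m) = Finset.range (min m J) := by
  ext x; simp; omega

lemma extP_ge (β : Fin q → ℕ) (m : ℕ) (h : q ≤ m) : extP β m = 0 :=
  dif_neg (by omega)

lemma extP_val (β : Fin q → ℕ) (l : Fin q) : extP β l.val = β l := by
  simp [extP, l.isLt]

lemma sum_total (a : Matrix (Fin p) (Fin q) Bool) :
    ∑ j, colSumB a j = ∑ i, rowSumB a i := by
  simp only [colSumB_eq_sum, rowSumB_eq_sum]
  exact Finset.sum_comm

def onesIn (a : Matrix (Fin p) (Fin q) Bool) (J : ℕ) (i : Fin p) : ℕ :=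
  ∑ j : Fin q, if (j : ℕ) < J ∧ a i j = true then 1 else 0

lemma sum_range_extP (γ : Fin q → ℕ) (J : ℕ) :
    ∑ j ∈ Finset.range J, extP γ j = ∑ j : Fin q, if (j : ℕ) < J then γ j else 0 := by
  induction J with
  | zero => simp
  | succ J ih =>
    rw [Finset.sum_range_succ, ih]
    have key : ∀ j : Fin q, (if (j:ℕ) < J + 1 then γ j else 0)
        = (if (j:ℕ) < J then γ j else 0) + (if (j:ℕ) = J then γ j else 0) := by
      intro j; split_ifs <;> omega
    rw [Finset.sum_congr rfl fun j _ => key j, Finset.sum_add_distrib]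
    congr 1
    unfold extP
    split
    · next h =>
      rw [Finset.sum_eq_single ⟨J, h⟩]
      · simp
      · intro b _ hb; rw [if_neg]; simpa [Fin.ext_iff] using hb
      · simp
    · next h =>
      symm; apply Finset.sum_eq_zero; intro j _
      rw [if_neg]; have := j.isLt; omega

lemma sum_range_conjP (α : Fin p → ℕ) (J : ℕ) :
    ∑ j ∈ Finset.range J, conjP α j = ∑ i, min (α i) J := by
  unfold conjP
  simp only [Finset.card_filter]
  rw [Finset.sum_comm]
  apply Finset.sum_congr rfl
  intro i _
  rw [← Finset.card_filter, filter_range_lt, Finset.card_range]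

lemma onesIn_le_rowSum (a : Matrix (Fin p) (Fin q) Bool) (J : ℕ) (i : Fin p) :
    onesIn a J i ≤ rowSumB a i := by
  rw [rowSumB_eq_sum]; unfold onesIn
  apply Finset.sum_le_sum; intro j _; split_ifs <;> simp_all

lemma card_fin_lt (m : ℕ) :
    ((univ : Finset (Fin q)).filter fun j : Fin q => (j:ℕ) < m).card = min m q := by
  rw [← Finset.card_range (min m q)]
  apply Finset.card_bij (fun (j : Fin q) _ => (j : ℕ))
  · intro a ha; simp at ha ⊢; omega
  · intro a _ b _ h; exact Fin.ext h
  · intro b hb; simp at hb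
    exact ⟨⟨b, by omega⟩, by simp; omega, rfl⟩

lemma onesIn_le (a : Matrix (Fin p) (Fin q) Bool) (J : ℕ) (i : Fin p) :
    onesIn a J i ≤ J := by
  have h1 : onesIn a J i ≤ ∑ j : Fin q, if (j:ℕ) < J then 1 else 0 := by
    unfold onesIn; apply Finset.sum_le_sum; intro j _; split_ifs <;> simp_all
  have h2 : ∑ j : Fin q, (if (j:ℕ) < J then 1 else 0) = min J q := by
    rw [← Finset.card_filter]; exact card_fin_lt J
  omega

lemma sum_onesIn (a : Matrix (Fin p) (Fin q) Bool) (γ : Fin q → ℕ)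
    (hcol : ∀ j, colSumB a j = γ j) (J : ℕ) :
    ∑ i, onesIn a J i = ∑ j ∈ Finset.range J, extP γ j := by
  rw [sum_range_extP]; unfold onesIn; rw [Finset.sum_comm]
  apply Finset.sum_congr rfl; intro j _
  by_cases h : (j:ℕ) < J
  · simp only [h, true_and, if_true]; rw [← hcol j, colSumB_eq_sum]
  · simp [h]

lemma dom_of_mem {α : Fin p → ℕ} {β : Fin q → ℕ} {a : Matrix (Fin p) (Fin q) Bool}
    (ha : a ∈ MatSet p q α β) : DomP (extP β) (conjP α) := by
  obtain ⟨hrow, hcol⟩ := ha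
  intro J
  rw [← sum_onesIn a β hcol J, sum_range_conjP]
  apply Finset.sum_le_sum; intro i _
  exact le_min ((onesIn_le_rowSum a J i).trans_eq (hrow i)) (onesIn_le a J i)

lemma part_le_q {α : Fin p → ℕ} {β : Fin q → ℕ} (hdom : DomP (extP β) (conjP α))
    (hsum : ∑ i, α i = ∑ j, β j) : ∀ i, α i ≤ q := by
  have h1 : ∑ j ∈ Finset.range q, extP β j = ∑ j, β j := by
    rw [sum_range_extP]; apply Finset.sum_congr rfl; intro j _; simp [j.isLt]
  have h2 := hdom q
  rw [h1, sum_range_conjP] at h2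
  intro i
  by_contra hc
  have hlt : ∑ i, min (α i) q < ∑ i, α i :=
    Finset.sum_lt_sum (fun i _ => min_le_left _ _) ⟨i, Finset.mem_univ i, by omega⟩
  omega

end Helpers

section Stair
variable {p q : ℕ}

def stair (q : ℕ) (α : Fin p → ℕ) : Matrix (Fin p) (Fin q) Bool :=
  fun i j => decide ((j:ℕ) < α i)

lemma stair_row {α : Fin p → ℕ} {i : Fin p} (hq : α i ≤ q) :
    rowSumB (stair q α) i = α i := by
  unfold rowSumB stair
  simp only [decide_eq_true_eq]
  rw [card_fin_lt]
  omega

lemma stair_col (α : Fin p → ℕ) (j : Fin q) :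
    colSumB (stair q α) j = conjP α (j:ℕ) := by
  unfold colSumB stair conjP
  simp only [decide_eq_true_eq]

lemma uniq_of_eq {α : Fin p → ℕ} {β : Fin q → ℕ} {a : Matrix (Fin p) (Fin q) Bool}
    (ha : a ∈ MatSet p q α β) (heq : extP β = conjP α) : a = stair q α := by
  obtain ⟨hrow, hcol⟩ := ha
  have hsums : ∀ J, ∑ i, onesIn a J i = ∑ i, min (α i) J := by
    intro J
    rw [sum_onesIn a β hcol J, ← sum_range_conjP, ← heq]
  have hpt : ∀ J (i : Fin p), onesIn a J i = min (α i) J := by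
    intro J i
    have hle : ∀ i' ∈ (univ : Finset (Fin p)), onesIn a J i' ≤ min (α i') J :=
      fun i' _ => le_min ((onesIn_le_rowSum a J i').trans_eq (hrow i')) (onesIn_le a J i')
    exact (Finset.sum_eq_sum_iff_of_le hle).1 (hsums J) i (mem_univ i)
  funext i l
  have h1 := hpt l.val i
  have h2 := hpt (l.val + 1) i
  have hstep : onesIn a (l.val+1) i = onesIn a l.val i + (if a i l = true then 1 else 0) := by
    unfold onesIn
    have key : ∀ m : Fin q, (if (m:ℕ) < l.val+1 ∧ a i m = true then (1:ℕ) else 0)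
        = (if (m:ℕ) < l.val ∧ a i m = true then 1 else 0)
          + (if m = l ∧ a i m = true then 1 else 0) := by
      intro m
      by_cases hc : a i m = true
      · simp only [hc, and_true]
        by_cases hm : m = l
        · subst hm; simp
        · have hm' : (m:ℕ) ≠ (l:ℕ) := fun h => hm (Fin.ext h)
          simp only [hm, if_false]
          split_ifs <;> omega
      · simp [hc]
    rw [Finset.sum_congr rfl fun m _ => key m, Finset.sum_add_distrib]
    congr 1
    rw [Finset.sum_eq_single l]
    · simp
    · intro b _ hb; simp [hb]
    · simp
  rw [h1, h2] at hstep
  show a i l = stair q α i l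
  unfold stair
  by_cases hl : (l:ℕ) < α i
  · cases hai : a i l
    · rw [hai] at hstep; simp at hstep; omega
    · simp [hl]
  · cases hai : a i l
    · simp [hl]
    · rw [hai] at hstep; simp at hstep; omega

lemma stair_mem {α : Fin p → ℕ} {β : Fin q → ℕ} (hq : ∀ i, α i ≤ q)
    (hcol : ∀ j : Fin q, conjP α (j : ℕ) = β j) : stair q α ∈ MatSet p q α β :=
  ⟨fun i => stair_row (hq i), fun j => (stair_col α j).trans (hcol j)⟩

lemma matset_eq_of_eq {α : Fin p → ℕ} {β : Fin q → ℕ} (heq : extP β = conjP α) :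
    MatSet p q α β = {stair q α} := by
  have hq : ∀ i, α i ≤ q := by
    intro i
    by_contra hc
    have h0 : extP β q = 0 := extP_ge β q le_rfl
    rw [heq] at h0
    unfold conjP at h0
    rw [Finset.card_eq_zero, Finset.filter_eq_empty_iff] at h0
    exact h0 (mem_univ i) (by omega)
  apply Set.eq_singleton_iff_unique_mem.2
  constructor
  · exact stair_mem hq (fun j => by rw [← heq, extP_val])
  · exact fun a ha => uniq_of_eq ha heq

end Stair

section Move
variable {p q : ℕ}

/-- Move a `true` from `(i,j)` to `(i,k)`. -/
def mv (a : Matrix (Fin p) (Fin q) Bool) (i : Fin p) (j k : Fin q) :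
    Matrix (Fin p) (Fin q) Bool :=
  fun i' j' => if i' = i ∧ j' = j then false else if i' = i ∧ j' = k then true else a i' j'

variable {a : Matrix (Fin p) (Fin q) Bool} {i : Fin p} {j k : Fin q}

lemma mv_row (hjk : j ≠ k) (hj : a i j = true) (hk : a i k = false) (i' : Fin p) :
    rowSumB (mv a i j k) i' = rowSumB a i' := by
  rw [rowSumB_eq_sum, rowSumB_eq_sum]
  by_cases hi : i' = i
  · subst hi
    have key : ∀ j' : Fin q,
        (if mv a i' j k i' j' = true then (1:ℕ) else 0) + (if j' = j then 1 else 0)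
        = (if a i' j' = true then 1 else 0) + (if j' = k then 1 else 0) := by
      intro j'; unfold mv; split_ifs <;> simp_all
    have hs := Finset.sum_congr rfl (fun j' (_ : j' ∈ (univ : Finset (Fin q))) => key j')
    rw [Finset.sum_add_distrib, Finset.sum_add_distrib] at hs
    simp only [Finset.sum_ite_eq', Finset.mem_univ, if_true] at hs
    omega
  · apply Finset.sum_congr rfl; intro j' _
    unfold mv; simp [hi]

lemma mv_col_j (hj : a i j = true) :
    colSumB (mv a i j k) j + 1 = colSumB a j := by
  rw [colSumB_eq_sum, colSumB_eq_sum]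
  have key : ∀ i' : Fin p,
      (if mv a i j k i' j = true then (1:ℕ) else 0) + (if i' = i then 1 else 0)
      = (if a i' j = true then 1 else 0) := by
    intro i'; unfold mv; split_ifs <;> simp_all
  have hs := Finset.sum_congr rfl (fun i' (_ : i' ∈ (univ : Finset (Fin p))) => key i')
  rw [Finset.sum_add_distrib] at hs
  simp only [Finset.sum_ite_eq', Finset.mem_univ, if_true] at hs
  omega

lemma mv_col_k (hjk : j ≠ k) (hk : a i k = false) :
    colSumB (mv a i j k) k = colSumB a k + 1 := by
  rw [colSumB_eq_sum, colSumB_eq_sum]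
  have key : ∀ i' : Fin p,
      (if mv a i j k i' k = true then (1:ℕ) else 0)
      = (if a i' k = true then 1 else 0) + (if i' = i then 1 else 0) := by
    intro i'; unfold mv; split_ifs <;> simp_all
  have hs := Finset.sum_congr rfl (fun i' (_ : i' ∈ (univ : Finset (Fin p))) => key i')
  rw [Finset.sum_add_distrib] at hs
  simp only [Finset.sum_ite_eq', Finset.mem_univ, if_true] at hs
  omega

lemma mv_col_other {l : Fin q} (hlj : l ≠ j) (hlk : l ≠ k) :
    colSumB (mv a i j k) l = colSumB a l := by
  rw [colSumB_eq_sum, colSumB_eq_sum]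
  apply Finset.sum_congr rfl; intro i' _
  unfold mv; simp [hlj, hlk]

lemma mv_other_row {i' : Fin p} (hi : i' ≠ i) (l : Fin q) :
    mv a i j k i' l = a i' l := by
  unfold mv; simp [hi]

end Move

section Exists
variable {p q : ℕ}

lemma exists_of_dom_aux (α : Fin p → ℕ) (β : Fin q → ℕ) (hβ : Antitone β)
    (hsum : ∑ i, α i = ∑ j, β j) :
    ∀ n (γ : Fin q → ℕ) (a : Matrix (Fin p) (Fin q) Bool), a ∈ MatSet p q α γ →
      DomP (extP β) (extP γ) →
      (∑ J ∈ Finset.range (q+1),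
        (∑ l ∈ Finset.range J, extP γ l - ∑ l ∈ Finset.range J, extP β l)) < n →
      (MatSet p q α β).Nonempty := by
  intro n
  induction n with
  | zero => intro γ a _ _ h; omega
  | succ n ih =>
    intro γ a ha hdom hΦ
    by_cases hβγ : β = γ
    · exact ⟨a, by rw [hβγ]; exact ha⟩
    -- find first difference j
    have hext : ∃ m, extP β m ≠ extP γ m := by
      by_contra h; push_neg at h
      apply hβγ; funext l
      have := h l.val
      rwa [extP_val, extP_val] at this
    set j := Nat.find hext with hjdef
    have hjspec : extP β j ≠ extP γ j := Nat.find_spec hext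
    have hjmin : ∀ m, m < j → extP β m = extP γ m := fun m hm =>
      not_not.1 (Nat.find_min hext hm)
    -- total sums equal
    have hsumγ : ∑ j', γ j' = ∑ j', β j' := by
      calc ∑ j', γ j' = ∑ j', colSumB a j' := by
            exact (Finset.sum_congr rfl fun j' _ => (ha.2 j').symm)
        _ = ∑ i, rowSumB a i := sum_total a
        _ = ∑ i, α i := Finset.sum_congr rfl fun i _ => ha.1 i
        _ = ∑ j', β j' := hsum
    -- find first k with γ < β there
    have hklt : ∃ m, extP γ m < extP β m := by
      by_contra h; push_neg at h
      have hjlt : extP β j < extP γ j := lt_of_le_of_ne (h j) hjspec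
      have hjq : j < q := by
        by_contra hq; push_neg at hq
        rw [extP_ge β j hq, extP_ge γ j hq] at hjspec; exact hjspec rfl
      have hsum1 : ∑ m ∈ Finset.range q, extP β m < ∑ m ∈ Finset.range q, extP γ m :=
        Finset.sum_lt_sum (fun m _ => h m) ⟨j, Finset.mem_range.2 hjq, hjlt⟩
      rw [sum_range_extP, sum_range_extP] at hsum1
      simp only [Fin.is_lt, if_true] at hsum1
      omega
    set k := Nat.find hklt with hkdef
    have hkspec : extP γ k < extP β k := Nat.find_spec hklt
    have hkmin : ∀ m, m < k → extP β m ≤ extP γ m := fun m hm =>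
      not_lt.1 (Nat.find_min hklt hm)
    have hjlt : extP β j < extP γ j := by
      have h2 := hdom (j+1)
      rw [Finset.sum_range_succ, Finset.sum_range_succ] at h2
      have hpre : ∑ l ∈ Finset.range j, extP β l = ∑ l ∈ Finset.range j, extP γ l :=
        Finset.sum_congr rfl fun m hm => hjmin m (Finset.mem_range.1 hm)
      have hle : extP β j ≤ extP γ j := by omega
      exact lt_of_le_of_ne hle hjspec
    have hjk : j < k := by
      have hle : j ≤ k := Nat.find_min' hext (by omega)
      have hne : j ≠ k := fun h => by rw [h] at hjlt; omega
      omega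
    have hjq : j < q := by
      by_contra hq; push_neg at hq
      rw [extP_ge β j hq, extP_ge γ j hq] at hjspec; exact hjspec rfl
    have hkq : k < q := by
      by_contra hq; push_neg at hq
      rw [extP_ge β k hq, extP_ge γ k hq] at hkspec; omega
    set j' : Fin q := ⟨j, hjq⟩ with hj'def
    set k' : Fin q := ⟨k, hkq⟩ with hk'def
    have hbj : extP β j = β j' := extP_val β j'
    have hcj : extP γ j = γ j' := extP_val γ j'
    have hbk : extP β k = β k' := extP_val β k'
    have hck : extP γ k = γ k' := extP_val γ k'
    have hβjk : β k' ≤ β j' := hβ (by simp [hj'def, hk'def, Fin.le_def]; omega)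
    have hγjk : γ k' + 2 ≤ γ j' := by
      rw [hbj, hcj] at hjlt; rw [hbk, hck] at hkspec; omega
    have hjk' : j' ≠ k' := by simp [hj'def, hk'def, Fin.ext_iff]; omega
    -- find a row with a 1 at j' and 0 at k'
    have hrowex : ∃ i, a i j' = true ∧ a i k' = false := by
      by_contra h; push_neg at h
      have hsub : ((univ : Finset (Fin p)).filter fun i => a i j' = true)
          ⊆ ((univ : Finset (Fin p)).filter fun i => a i k' = true) := by
        intro i hi
        simp only [Finset.mem_filter, Finset.mem_univ, true_and] at hi ⊢
        have := h i hi
        simpa using this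
      have hcard := Finset.card_le_card hsub
      have e1 : colSumB a j' ≤ colSumB a k' := hcard
      rw [ha.2 j', ha.2 k'] at e1
      omega
    obtain ⟨i, hij, hik⟩ := hrowex
    set a' := mv a i j' k' with ha'def
    set γ' : Fin q → ℕ := fun l => if l = j' then γ l - 1 else if l = k' then γ l + 1 else γ l
      with hγ'def
    have hγj1 : 1 ≤ γ j' := by omega
    have ha' : a' ∈ MatSet p q α γ' := by
      constructor
      · intro i'; rw [ha'def, mv_row hjk' hij hik]; exact ha.1 i'
      · intro l
        by_cases h1 : l = j'
        · have e := mv_col_j (k := k') hij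
          rw [← ha'def, ← h1] at e
          have e2 : γ' l = γ l - 1 := by simp [hγ'def, h1]
          rw [e2, ← ha.2 l]
          omega
        · by_cases h2 : l = k'
          · have e := mv_col_k hjk' hik
            rw [← ha'def, ← h2] at e
            have e2 : γ' l = γ l + 1 := by simp [hγ'def, h1, h2, Ne.symm hjk']
            rw [e2, ← ha.2 l, e]
          · have e := mv_col_other (a := a) (i := i) h1 h2
            rw [← ha'def] at e
            have e2 : γ' l = γ l := by simp [hγ'def, h1, h2]
            rw [e2, ← ha.2 l, e]
    -- partial sums of γ'
    have hclaim : ∀ J, (∑ l ∈ Finset.range J, extP γ' l) + (if j < J then 1 else 0)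
        = (∑ l ∈ Finset.range J, extP γ l) + (if k < J then 1 else 0) := by
      intro J
      rw [sum_range_extP, sum_range_extP]
      have key : ∀ l : Fin q,
          (if (l:ℕ) < J then γ' l else 0) + (if l = j' ∧ j < J then 1 else 0)
          = (if (l:ℕ) < J then γ l else 0) + (if l = k' ∧ k < J then 1 else 0) := by
        intro l
        have hγ'l : γ' l = if l = j' then γ l - 1 else if l = k' then γ l + 1 else γ l := rfl
        by_cases h1 : l = j'
        · rw [h1]
          have hg : γ' j' = γ j' - 1 := by simp [hγ'def]
          rw [hg]
          simp only [show ((j' : Fin q) : ℕ) = j from rfl, eq_self_iff_true, true_and,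
            hjk', false_and, if_false]
          split_ifs <;> omega
        · by_cases h2 : l = k'
          · rw [h2]
            have hg : γ' k' = γ k' + 1 := by simp [hγ'def, Ne.symm hjk']
            rw [hg]
            simp only [show ((k' : Fin q) : ℕ) = k from rfl, eq_self_iff_true, true_and,
              Ne.symm hjk', false_and, if_false]
            split_ifs <;> omega
          · simp only [hγ'l, if_neg h1, if_neg h2, h1, h2, false_and, if_false, add_zero]
      have hs := Finset.sum_congr rfl (fun l (_ : l ∈ (univ : Finset (Fin q))) => key l)
      rw [Finset.sum_add_distrib, Finset.sum_add_distrib] at hs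
      have e1 : ∑ l : Fin q, (if l = j' ∧ j < J then (1:ℕ) else 0) = if j < J then 1 else 0 := by
        by_cases hJ : j < J <;> simp [hJ]
      have e2 : ∑ l : Fin q, (if l = k' ∧ k < J then (1:ℕ) else 0) = if k < J then 1 else 0 := by
        by_cases hJ : k < J <;> simp [hJ]
      rw [e1, e2] at hs
      exact hs
    -- strict bound for j < J ≤ k
    have hstrict : ∀ J, j < J → J ≤ k →
        (∑ l ∈ Finset.range J, extP β l) + 1 ≤ ∑ l ∈ Finset.range J, extP γ l := by
      intro J h1 h2
      have e1 : ∑ l ∈ Finset.range (j+1), extP β l + 1 ≤ ∑ l ∈ Finset.range (j+1), extP γ l := by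
        rw [Finset.sum_range_succ, Finset.sum_range_succ]
        have hpre : ∑ l ∈ Finset.range j, extP β l = ∑ l ∈ Finset.range j, extP γ l :=
          Finset.sum_congr rfl fun m hm => hjmin m (Finset.mem_range.1 hm)
        omega
      have e2 : ∑ l ∈ Finset.Ico (j+1) J, extP β l ≤ ∑ l ∈ Finset.Ico (j+1) J, extP γ l :=
        Finset.sum_le_sum fun m hm => hkmin m (by have := Finset.mem_Ico.1 hm; omega)
      have e3 : ∑ l ∈ Finset.range (j+1), extP β l + ∑ l ∈ Finset.Ico (j+1) J, extP β l
          = ∑ l ∈ Finset.range J, extP β l := by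
        rw [Finset.range_eq_Ico, Finset.range_eq_Ico]
        exact Finset.sum_Ico_consecutive (extP β) (by omega : 0 ≤ j+1) (by omega : j+1 ≤ J)
      have e4 : ∑ l ∈ Finset.range (j+1), extP γ l + ∑ l ∈ Finset.Ico (j+1) J, extP γ l
          = ∑ l ∈ Finset.range J, extP γ l := by
        rw [Finset.range_eq_Ico, Finset.range_eq_Ico]
        exact Finset.sum_Ico_consecutive (extP γ) (by omega : 0 ≤ j+1) (by omega : j+1 ≤ J)
      omega
    -- new dominance
    have hdom' : DomP (extP β) (extP γ') := by
      intro J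
      have hcJ := hclaim J
      have hdJ := hdom J
      by_cases h1 : j < J
      · by_cases h2 : k < J
        · simp only [h1, h2, if_true] at hcJ; omega
        · have := hstrict J h1 (by omega)
          simp only [h1, h2, if_true, if_false] at hcJ
          omega
      · have h2 : ¬ k < J := by omega
        simp only [h1, h2, if_false] at hcJ
        omega
    -- measure decreases
    have hdec : ∑ J ∈ Finset.range (q+1),
          (∑ l ∈ Finset.range J, extP γ' l - ∑ l ∈ Finset.range J, extP β l)
        < ∑ J ∈ Finset.range (q+1),
          (∑ l ∈ Finset.range J, extP γ l - ∑ l ∈ Finset.range J, extP β l) := by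
      apply Finset.sum_lt_sum
      · intro J _
        have hcJ := hclaim J
        have hle : ∑ l ∈ Finset.range J, extP γ' l ≤ ∑ l ∈ Finset.range J, extP γ l := by
          by_cases h1 : j < J
          · by_cases h2 : k < J
            · simp only [h1, h2, if_true] at hcJ; omega
            · simp only [h1, h2, if_true, if_false] at hcJ; omega
          · have h2 : ¬ k < J := by omega
            simp only [h1, h2, if_false] at hcJ; omega
        omega
      · refine ⟨j+1, Finset.mem_range.2 (by omega), ?_⟩
        have hcJ := hclaim (j+1)
        simp only [show j < j+1 from by omega, show ¬ k < j+1 from by omega,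
          if_true, if_false] at hcJ
        have hst := hstrict (j+1) (by omega) (by omega)
        omega
    exact ih γ' a' ha' hdom' (by omega)

lemma exists_of_dom (α : Fin p → ℕ) (β : Fin q → ℕ) (hβ : Antitone β)
    (hsum : ∑ i, α i = ∑ j, β j) (hdom : DomP (extP β) (conjP α)) :
    (MatSet p q α β).Nonempty := by
  have hq := part_le_q hdom hsum
  set γ0 : Fin q → ℕ := fun j => conjP α j.val with hγ0
  have hst : stair q α ∈ MatSet p q α γ0 :=
    ⟨fun i => stair_row (hq i), fun j => stair_col α j⟩
  have hext : extP γ0 = conjP α := by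
    funext m
    by_cases h : m < q
    · simp [extP, h, hγ0]
    · rw [extP_ge _ _ (by omega)]
      symm
      unfold conjP
      rw [Finset.card_eq_zero, Finset.filter_eq_empty_iff]
      intro i _
      have := hq i; omega
  refine exists_of_dom_aux α β hβ hsum
    ((∑ J ∈ Finset.range (q+1),
      (∑ l ∈ Finset.range J, extP γ0 l - ∑ l ∈ Finset.range J, extP β l)) + 1)
    γ0 (stair q α) hst ?_ (by omega)
  rw [hext]; exact hdom

end Exists

section Two
variable {p q : ℕ}

lemma two_of_strict (α : Fin p → ℕ) (β : Fin q → ℕ) (hβ : Antitone β)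
    (hsum : ∑ i, α i = ∑ j, β j) (hdom : DomP (extP β) (conjP α))
    (hne : extP β ≠ conjP α) :
    ∃ a ∈ MatSet p q α β, ∃ b ∈ MatSet p q α β, a ≠ b := by
  obtain ⟨a, ha⟩ := exists_of_dom α β hβ hsum hdom
  have hq := part_le_q hdom hsum
  have hex : ∃ m, extP β m ≠ conjP α m := by
    by_contra h; push_neg at h; exact hne (funext h)
  set m := Nat.find hex with hmdef
  have hmspec : extP β m ≠ conjP α m := Nat.find_spec hex
  have hmmin : ∀ l, l < m → extP β l = conjP α l := fun l hl =>
    not_not.1 (Nat.find_min hex hl)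
  have hpre : ∑ l ∈ Finset.range m, extP β l = ∑ l ∈ Finset.range m, conjP α l :=
    Finset.sum_congr rfl fun l hl => hmmin l (Finset.mem_range.1 hl)
  have hmlt : extP β m < conjP α m := by
    have h2 := hdom (m+1)
    rw [Finset.sum_range_succ, Finset.sum_range_succ] at h2
    have : extP β m ≤ conjP α m := by omega
    exact lt_of_le_of_ne this hmspec
  set J := m + 1 with hJdef
  have hJ : ∑ l ∈ Finset.range J, extP β l < ∑ l ∈ Finset.range J, conjP α l := by
    rw [hJdef, Finset.sum_range_succ, Finset.sum_range_succ]
    omega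
  have h1 : ∑ i, onesIn a J i < ∑ i, min (α i) J := by
    rw [sum_onesIn a β ha.2 J, ← sum_range_conjP]
    exact hJ
  have hrowi : ∃ i, onesIn a J i < min (α i) J := by
    by_contra h; push_neg at h
    have := Finset.sum_le_sum (fun i (_ : i ∈ (univ : Finset (Fin p))) => h i)
    omega
  obtain ⟨i, hi⟩ := hrowi
  -- a zero in row i among the first J columns
  have hwz : ∃ j1 : Fin q, (j1:ℕ) < J ∧ a i j1 = false := by
    by_contra h; push_neg at h
    have heq : onesIn a J i = min J q := by
      unfold onesIn
      have : ∀ jj : Fin q, (if (jj:ℕ) < J ∧ a i jj = true then (1:ℕ) else 0)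
          = (if (jj:ℕ) < J then 1 else 0) := by
        intro jj
        by_cases hc : (jj:ℕ) < J
        · have := h jj hc
          simp only [hc, true_and]
          cases hcc : a i jj
          · exact absurd hcc this
          · rfl
        · simp [hc]
      rw [Finset.sum_congr rfl fun jj _ => this jj, ← Finset.card_filter, card_fin_lt]
    have hαq := hq i
    omega
  obtain ⟨j1, hj1J, hj1⟩ := hwz
  -- a one in row i beyond the first J columns
  have hoz : ∃ j2 : Fin q, J ≤ (j2:ℕ) ∧ a i j2 = true := by
    by_contra h; push_neg at h
    have hle : rowSumB a i ≤ onesIn a J i := by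
      rw [rowSumB_eq_sum]; unfold onesIn
      apply Finset.sum_le_sum; intro jj _
      by_cases hc : a i jj = true
      · have hlt : (jj:ℕ) < J := by
          by_contra hcc
          exact absurd hc (by simpa using h jj (by omega))
        simp [hc, hlt]
      · simp [hc]
    rw [ha.1 i] at hle
    omega
  obtain ⟨j2, hj2J, hj2⟩ := hoz
  have hj12 : (j1:ℕ) < (j2:ℕ) := by omega
  have hβ12 : β j2 ≤ β j1 := hβ (by rw [Fin.le_def]; omega)
  have hj12ne : j1 ≠ j2 := fun h => by rw [h] at hj12; omega
  -- a second row with 1 at j1, 0 at j2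
  have hrow2 : ∃ i2, a i2 j1 = true ∧ a i2 j2 = false := by
    by_contra h; push_neg at h
    have hsub : ((univ : Finset (Fin p)).filter fun i' => a i' j1 = true)
        ⊆ ((univ : Finset (Fin p)).filter fun i' => a i' j2 = true) := by
      intro i' hi'
      simp only [Finset.mem_filter, Finset.mem_univ, true_and] at hi' ⊢
      have := h i' hi'
      simpa using this
    have hss : ((univ : Finset (Fin p)).filter fun i' => a i' j1 = true)
        ⊂ ((univ : Finset (Fin p)).filter fun i' => a i' j2 = true) := by
      rw [Finset.ssubset_iff_of_subset hsub]
      refine ⟨i, ?_, ?_⟩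
      · simp [hj2]
      · simp [hj1]
    have hcard := Finset.card_lt_card hss
    have e1 : colSumB a j1 < colSumB a j2 := hcard
    rw [ha.2 j1, ha.2 j2] at e1
    omega
  obtain ⟨i2, h21, h22⟩ := hrow2
  have hii : i2 ≠ i := by
    intro h; rw [h, hj1] at h21; exact Bool.noConfusion h21
  -- double swap
  set a1 := mv a i j2 j1 with ha1def
  have ha1 : a1 i2 j1 = true := by rw [ha1def, mv_other_row hii]; exact h21
  have ha2 : a1 i2 j2 = false := by rw [ha1def, mv_other_row hii]; exact h22
  set b := mv a1 i2 j1 j2 with hbdef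
  have hbmem : b ∈ MatSet p q α β := by
    constructor
    · intro i'
      rw [hbdef, mv_row hj12ne ha1 ha2, ha1def,
        mv_row (Ne.symm hj12ne) hj2 hj1]
      exact ha.1 i'
    · intro l
      by_cases hl1 : l = j1
      · rw [hl1]
        have e1 := mv_col_j (a := a1) (i := i2) (k := j2) ha1
        rw [← hbdef] at e1
        have e2 := mv_col_k (a := a) (i := i) (Ne.symm hj12ne) hj1
        rw [← ha1def] at e2
        have := ha.2 j1
        omega
      · by_cases hl2 : l = j2
        · rw [hl2]
          have e1 := mv_col_k (a := a1) (i := i2) hj12ne ha2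
          rw [← hbdef] at e1
          have e2 := mv_col_j (a := a) (i := i) (k := j1) hj2
          rw [← ha1def] at e2
          have := ha.2 j2
          omega
        · have e1 := mv_col_other (a := a1) (i := i2) (j := j1) (k := j2) hl1 hl2
          rw [← hbdef] at e1
          have e2 := mv_col_other (a := a) (i := i) (j := j2) (k := j1) hl2 hl1
          rw [← ha1def] at e2
          rw [e1, e2]
          exact ha.2 l
  refine ⟨a, ha, b, hbmem, ?_⟩
  intro h
  have hb1 : b i j2 = false := by
    rw [hbdef, mv_other_row (Ne.symm hii), ha1def]
    unfold mv
    simp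
  rw [← h, hj2] at hb1
  exact Bool.noConfusion hb1

end Two

/-- Gale–Ryser with a uniqueness refinement: the set of p×q 0/1 matrices with row sums
`α` and column sums `β` is nonempty iff `β ⪯ ᵗα`; it has exactly one element if
`β = ᵗα`, and at least two if `β ≺ ᵗα` strictly. -/
theorem matSet_dominance (p q : ℕ) (α : Fin p → ℕ) (β : Fin q → ℕ)
    (hα : Antitone α) (hβ : Antitone β) (hsum : ∑ i, α i = ∑ j, β j) :
    ((MatSet p q α β).Nonempty ↔ DomP (extP β) (conjP α)) ∧
    (extP β = conjP α → (MatSet p q α β).ncard = 1) ∧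
    (DomP (extP β) (conjP α) → extP β ≠ conjP α → 2 ≤ (MatSet p q α β).ncard) := by
  refine ⟨⟨fun ⟨a, ha⟩ => dom_of_mem ha, fun hdom => exists_of_dom α β hβ hsum hdom⟩, ?_, ?_⟩
  · intro heq
    rw [matset_eq_of_eq heq, Set.ncard_singleton]
  · intro hdom hne
    obtain ⟨a, ha, b, hb, hab⟩ := two_of_strict α β hβ hsum hdom hne
    have h2 : 1 < (MatSet p q α β).ncard :=
      (Set.one_lt_ncard (Set.toFinite _)).2 ⟨a, ha, b, hb, hab⟩
    omega
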